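/- Strohmer–Vershynin one-step identity (uniform sampling, unit rows): if T ⊆ {1,…,m} is nonempty, ‖a_i‖ = 1 and ⟨a_i, x⟩ = b_i for all i ∈ T, then (1/|T|)Σ_{i∈T} ‖x_k + (b_i - ⟨a_i,x_k⟩)a_i - x‖² = ‖x_k - x‖² - (1/|T|)‖A_T(x_k - x)‖² ≤ (1 - σ_min(A_T)²/|T|)‖x_k - x‖². -/

import Mathlib

/-!
A Kaczmarz step from `x_k` with row `a_i` is the orthogonal projection onto the hyperplane
`⟪a_i, ·⟫ = b_i`, which contains `x`; by Pythagoras it removes exactly the component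
`⟪a_i, x_k - x⟫` of the error. Averaging over `T` gives the identity, and testing the infimum
defining `σ_min(A_T)` on `(x_k - x) / ‖x_k - x‖` gives `∑ ⟪a_i, x_k - x⟫² ≥ σ_min² ‖x_k - x‖²`.
-/

open RealInnerProductSpace Finset

/-- The smallest singular value of the row-submatrix `A_T`. -/
noncomputable def sigmaSubMin {m n : ℕ} (a : Fin m → EuclideanSpace ℝ (Fin n))
    (T : Finset (Fin m)) : ℝ :=
  sInf {t : ℝ | ∃ y : EuclideanSpace ℝ (Fin n), ‖y‖ = 1 ∧
    t = Real.sqrt (∑ i ∈ T, ⟪a i, y⟫ ^ 2)}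

section KaczmarzStep

variable {E : Type*} [NormedAddCommGroup E] [InnerProductSpace ℝ E]

theorem norm_sub_inner_smul_sq_of_norm_eq_one {a : E} (ha : ‖a‖ = 1) (v : E) :
    ‖v - ⟪a, v⟫ • a‖ ^ 2 = ‖v‖ ^ 2 - ⟪a, v⟫ ^ 2 := by
  rw [norm_sub_sq_real, real_inner_smul_right, norm_smul, mul_pow, ha, real_inner_comm,
    Real.norm_eq_abs, sq_abs]
  ring

theorem norm_kaczmarz_step_sub_sq {a x : E} {β : ℝ} (ha : ‖a‖ = 1) (hx : ⟪a, x⟫ = β) (y : E) :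
    ‖y + (β - ⟪a, y⟫) • a - x‖ ^ 2 = ‖y - x‖ ^ 2 - ⟪a, y - x⟫ ^ 2 := by
  have hstep : y + (β - ⟪a, y⟫) • a - x = (y - x) - ⟪a, y - x⟫ • a := by
    rw [← hx, inner_sub_right]
    module
  rw [hstep, norm_sub_inner_smul_sq_of_norm_eq_one ha]

end KaczmarzStep

section SigmaSubMin

variable {m n : ℕ} (a : Fin m → EuclideanSpace ℝ (Fin n)) (T : Finset (Fin m))

theorem sigmaSubMin_nonneg : 0 ≤ sigmaSubMin a T :=
  Real.sInf_nonneg fun _ ⟨_, _, ht⟩ => ht ▸ Real.sqrt_nonneg _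

theorem sigmaSubMin_mul_norm_le (e : EuclideanSpace ℝ (Fin n)) :
    sigmaSubMin a T * ‖e‖ ≤ √(∑ i ∈ T, ⟪a i, e⟫ ^ 2) := by
  rcases eq_or_ne e 0 with rfl | he
  · simp
  have hnorm : 0 < ‖e‖ := norm_pos_iff.mpr he
  have hunit : ‖‖e‖⁻¹ • e‖ = 1 := by
    rw [norm_smul, norm_inv, norm_norm, inv_mul_cancel₀ hnorm.ne']
  have hle : sigmaSubMin a T ≤ √(∑ i ∈ T, ⟪a i, ‖e‖⁻¹ • e⟫ ^ 2) :=
    csInf_le ⟨0, fun _ ⟨_, _, ht⟩ => ht ▸ Real.sqrt_nonneg _⟩ ⟨_, hunit, rfl⟩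
  have hscale : √(∑ i ∈ T, ⟪a i, ‖e‖⁻¹ • e⟫ ^ 2) = ‖e‖⁻¹ * √(∑ i ∈ T, ⟪a i, e⟫ ^ 2) := by
    simp only [real_inner_smul_right, mul_pow, ← Finset.mul_sum]
    rw [Real.sqrt_mul (by positivity), Real.sqrt_sq (by positivity)]
  rw [hscale] at hle
  rwa [← le_inv_mul_iff₀' hnorm]

theorem sigmaSubMin_sq_mul_norm_sq_le (e : EuclideanSpace ℝ (Fin n)) :
    sigmaSubMin a T ^ 2 * ‖e‖ ^ 2 ≤ ∑ i ∈ T, ⟪a i, e⟫ ^ 2 := by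
  rw [← mul_pow, ← Real.sq_sqrt (by positivity : 0 ≤ ∑ i ∈ T, ⟪a i, e⟫ ^ 2)]
  exact pow_le_pow_left₀ (mul_nonneg (sigmaSubMin_nonneg a T) (norm_nonneg e))
    (sigmaSubMin_mul_norm_le a T e) 2

end SigmaSubMin

/-- Strohmer–Vershynin one-step identity for uniform sampling over
unit-norm rows, together with the resulting contraction estimate. -/
theorem strohmer_vershynin_one_step {m n : ℕ} (a : Fin m → EuclideanSpace ℝ (Fin n))
    (x xk : EuclideanSpace ℝ (Fin n)) (b : Fin m → ℝ) (T : Finset (Fin m))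
    (hT : T.Nonempty)
    (ha : ∀ i ∈ T, ‖a i‖ = 1)
    (hcons : ∀ i ∈ T, ⟪a i, x⟫ = b i) :
    (1 / T.card : ℝ) * ∑ i ∈ T, ‖xk + (b i - ⟪a i, xk⟫) • a i - x‖ ^ 2 =
        ‖xk - x‖ ^ 2 - (1 / T.card : ℝ) * ∑ i ∈ T, ⟪a i, xk - x⟫ ^ 2 ∧
      (1 / T.card : ℝ) * ∑ i ∈ T, ‖xk + (b i - ⟪a i, xk⟫) • a i - x‖ ^ 2 ≤
        (1 - sigmaSubMin a T ^ 2 / T.card) * ‖xk - x‖ ^ 2 := by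
  have hcard : (T.card : ℝ) ≠ 0 := by exact_mod_cast hT.card_pos.ne'
  have hmean : (1 / T.card : ℝ) * ∑ i ∈ T, ‖xk + (b i - ⟪a i, xk⟫) • a i - x‖ ^ 2 =
      ‖xk - x‖ ^ 2 - (1 / T.card : ℝ) * ∑ i ∈ T, ⟪a i, xk - x⟫ ^ 2 := by
    rw [Finset.sum_congr rfl fun i hi => norm_kaczmarz_step_sub_sq (ha i hi) (hcons i hi) xk,
      Finset.sum_sub_distrib, Finset.sum_const, nsmul_eq_mul]
    field_simp
  have hdecrease : sigmaSubMin a T ^ 2 / T.card * ‖xk - x‖ ^ 2 ≤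
      (1 / T.card : ℝ) * ∑ i ∈ T, ⟪a i, xk - x⟫ ^ 2 := by
    rw [div_mul_eq_mul_div, one_div_mul_eq_div]
    gcongr
    exact sigmaSubMin_sq_mul_norm_sq_le a T (xk - x)
  refine ⟨hmean, ?_⟩
  rw [hmean]
  linarith
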